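/- Let X and Y be complex Banach spaces, A ∈ B(X), B ∈ B(Y), C ∈ B(Y, X), and let M_C ∈ B(X ⊕ Y) be the upper-triangular operator matrix M_C(x, y) = (Ax + Cy, By). Then σ_des(B) ⊆ σ_des(M_C) ⊆ σ_des(A) ∪ σ_des(B); moreover the set W_{σ_des}(A,B,C) := (σ_des(A) ∪ σ_des(B)) \ σ_des(M_C) satisfies W_{σ_des}(A,B,C) ⊆ (σ_des(A) ∩ σ_asc(B)) \ σ_des(B) and W_{σ_des}(A,B,C) ⊆ η(σ_des(B)), where η is the polynomially convex hull, σ_des the descent spectrum and σ_asc the ascent spectrum. -/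

import Mathlib

noncomputable section

open ContinuousLinearMap Metric Set

variable {E : Type*} [NormedAddCommGroup E] [NormedSpace ℂ E]
variable {X Y : Type*} [NormedAddCommGroup X] [NormedSpace ℂ X] [CompleteSpace X]
  [NormedAddCommGroup Y] [NormedSpace ℂ Y] [CompleteSpace Y]

/-- `T` has finite descent: some power has the same range as the next one. -/
def HasFiniteDescent (T : E →L[ℂ] E) : Prop :=
  ∃ k : ℕ, LinearMap.range ((T ^ k : E →L[ℂ] E) : E →ₗ[ℂ] E) = LinearMap.range ((T ^ (k + 1) : E →L[ℂ] E) : E →ₗ[ℂ] E)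

/-- `T` has finite ascent: some power has the same kernel as the next one. -/
def HasFiniteAscent (T : E →L[ℂ] E) : Prop :=
  ∃ k : ℕ, LinearMap.ker ((T ^ k : E →L[ℂ] E) : E →ₗ[ℂ] E) = LinearMap.ker ((T ^ (k + 1) : E →L[ℂ] E) : E →ₗ[ℂ] E)

/-- The descent spectrum. -/
def descentSpectrum (T : E →L[ℂ] E) : Set ℂ :=
  {z | ¬ HasFiniteDescent (T - z • 1)}

/-- The ascent spectrum. -/
def ascentSpectrum (T : E →L[ℂ] E) : Set ℂ :=
  {z | ¬ HasFiniteAscent (T - z • 1)}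

/-- The polynomially convex hull of a set `M ⊆ ℂ`. -/
def polyHull (M : Set ℂ) : Set ℂ :=
  {w | ∀ p : Polynomial ℂ, ∀ m : ℝ, (∀ z ∈ M, ‖p.eval z‖ ≤ m) → ‖p.eval w‖ ≤ m}

/-- The upper-triangular operator matrix `M_C (x, y) = (A x + C y, B y)` on `X ⊕ Y`. -/
def ucMat (A : X →L[ℂ] X) (B : Y →L[ℂ] Y) (C : Y →L[ℂ] X) :
    (X × Y) →L[ℂ] (X × Y) :=
  (A.comp (ContinuousLinearMap.fst ℂ X Y) + C.comp (ContinuousLinearMap.snd ℂ X Y)).prod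
    (B.comp (ContinuousLinearMap.snd ℂ X Y))

/-!
Powers of `M = ucMat A B C` act as `A ^ n` on `X × 0` and as `B ^ n` on the second coordinate.
Chasing ranges through this triangular structure gives `σ_des(B) ⊆ σ_des(M) ⊆ σ_des(A) ∪ σ_des(B)`,
and shows that finite descent of `M - λ` together with finite ascent of `B - λ` forces finite
descent of `A - λ`; so it remains to see that `B - λ` has finite ascent when `λ ∉ η(σ_des(B))`.

Then some polynomial `p` satisfies `‖p‖ ≤ m < ‖p(λ)‖` on `σ_des(B)`. By the maximum modulus
principle the component `U` of `{‖p‖ > m}` containing `λ` is unbounded, so it meets the resolvent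
set, and `B - w` has finite descent for every `w ∈ U`. For an operator `P` with finite descent
`k`, the map `(x, v) ↦ P x + v` on `E × ker P ^ k` is onto, and by the open mapping theorem it
stays onto, with a uniform bound, after replacing `P` by `P - z` for small `z`. Consequently: if
`P - z` is injective for arbitrarily small `z`, then `P` has finite ascent; and if `P` also has
finite ascent, then `P - z` is injective for all small `z ≠ 0`. Hence the closure of
`{w | B - w injective}` meets `U` in a relatively clopen set, which by connectedness is all of `U`.
-/

open Filter Topology Function

namespace Module.End

variable {R M : Type*}

section Semiring

variable [Semiring R] [AddCommMonoid M] [Module R M] (f : Module.End R M)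

theorem range_pow_succ_le (k : ℕ) : LinearMap.range (f ^ (k + 1)) ≤ LinearMap.range (f ^ k) :=
  LinearMap.range_comp_le_range f (f ^ k)

theorem ker_pow_le_ker_pow_succ (k : ℕ) : LinearMap.ker (f ^ k) ≤ LinearMap.ker (f ^ (k + 1)) := by
  rw [pow_succ']
  exact LinearMap.ker_le_ker_comp (f ^ k) f

theorem range_pow_add_eq {f : Module.End R M} {k : ℕ}
    (h : LinearMap.range (f ^ k) = LinearMap.range (f ^ (k + 1))) :
    ∀ m, LinearMap.range (f ^ (k + m)) = LinearMap.range (f ^ k)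
  | 0 => rfl
  | m + 1 => by
    rw [show k + (m + 1) = m + (k + 1) by omega, pow_add, mul_eq_comp, LinearMap.range_comp, ← h,
      ← LinearMap.range_comp, ← mul_eq_comp, ← pow_add, add_comm, range_pow_add_eq h m]

theorem range_pow_eq_of_le {f : Module.End R M} {k n : ℕ}
    (h : LinearMap.range (f ^ k) = LinearMap.range (f ^ (k + 1))) (hn : k ≤ n) :
    LinearMap.range (f ^ n) = LinearMap.range (f ^ k) := by
  obtain ⟨m, rfl⟩ := Nat.exists_eq_add_of_le hn
  exact range_pow_add_eq h m

variable {f} in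
theorem pow_apply_of_apply_eq_smul {μ : R} {x : M} (h : f x = μ • x) (n : ℕ) :
    (f ^ n) x = μ ^ n • x := by
  induction n with
  | zero => simp
  | succ n ih => rw [pow_succ', mul_apply, ih, map_smul, h, smul_smul, pow_succ]

end Semiring

variable [Ring R] [AddCommGroup M] [Module R M]

theorem range_sup_ker_pow_eq_top {f : Module.End R M} {k : ℕ}
    (h : LinearMap.range (f ^ k) = LinearMap.range (f ^ (k + 1))) :
    LinearMap.range f ⊔ LinearMap.ker (f ^ k) = ⊤ := by
  refine eq_top_iff.2 fun y _ => ?_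
  obtain ⟨x, hx⟩ : (f ^ k) y ∈ LinearMap.range (f ^ (k + 1)) := h ▸ LinearMap.mem_range_self _ y
  refine Submodule.mem_sup.2 ⟨f x, LinearMap.mem_range_self f x, y - f x, ?_, by abel⟩
  rw [LinearMap.mem_ker, map_sub, ← mul_apply, ← pow_succ, hx, sub_self]

theorem mem_ker_pow_of_commute_of_injective {f g : Module.End R M} (hfg : Commute f g)
    (hg : Function.Injective g) {n : ℕ} {x : M} (hx : g x ∈ LinearMap.ker (f ^ n)) :
    x ∈ LinearMap.ker (f ^ n) := by
  rw [LinearMap.mem_ker, ← mul_apply, (hfg.pow_left n).eq, mul_apply] at hx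
  exact hg (hx.trans (map_zero g).symm)

end Module.End

theorem hasFiniteDescent_iff (T : E →L[ℂ] E) :
    HasFiniteDescent T ↔ ∃ k : ℕ, LinearMap.range ((T : E →ₗ[ℂ] E) ^ k) =
      LinearMap.range ((T : E →ₗ[ℂ] E) ^ (k + 1)) := by
  simp only [HasFiniteDescent, toLinearMap_pow]

theorem hasFiniteAscent_iff (T : E →L[ℂ] E) :
    HasFiniteAscent T ↔ ∃ k : ℕ, LinearMap.ker ((T : E →ₗ[ℂ] E) ^ k) =
      LinearMap.ker ((T : E →ₗ[ℂ] E) ^ (k + 1)) := by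
  simp only [HasFiniteAscent, toLinearMap_pow]

theorem hasFiniteDescent_of_range_pow_le {T : E →L[ℂ] E} {k : ℕ}
    (h : LinearMap.range ((T : E →ₗ[ℂ] E) ^ k) ≤ LinearMap.range ((T : E →ₗ[ℂ] E) ^ (k + 1))) :
    HasFiniteDescent T :=
  (hasFiniteDescent_iff T).2 ⟨k, h.antisymm (Module.End.range_pow_succ_le _ k)⟩

section UpperTriangular

variable {X Y : Type*} [NormedAddCommGroup X] [NormedSpace ℂ X] [NormedAddCommGroup Y]
  [NormedSpace ℂ Y] (A : X →L[ℂ] X) (B : Y →L[ℂ] Y) (C : Y →L[ℂ] X)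

theorem ucMat_apply (x : X) (y : Y) : ucMat A B C (x, y) = (A x + C y, B y) := rfl

theorem ucMat_sub_smul_one (z : ℂ) : ucMat A B C - z • 1 = ucMat (A - z • 1) (B - z • 1) C := by
  ext <;> simp [ucMat]

theorem ucMat_pow_apply_inl (n : ℕ) (x : X) :
    ((ucMat A B C : X × Y →ₗ[ℂ] X × Y) ^ n) (x, 0) = (((A : X →ₗ[ℂ] X) ^ n) x, 0) := by
  induction n with
  | zero => rfl
  | succ n ih =>
    rw [pow_succ', Module.End.mul_apply, ih, ContinuousLinearMap.coe_coe, ucMat_apply]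
    simp [pow_succ', Module.End.mul_apply]

theorem snd_ucMat_pow_apply (n : ℕ) (p : X × Y) :
    (((ucMat A B C : X × Y →ₗ[ℂ] X × Y) ^ n) p).2 = ((B : Y →ₗ[ℂ] Y) ^ n) p.2 := by
  induction n with
  | zero => rfl
  | succ n ih => rw [pow_succ', Module.End.mul_apply, pow_succ', Module.End.mul_apply, ← ih]; rfl

variable {A B C}

theorem HasFiniteDescent.of_ucMat (h : HasFiniteDescent (ucMat A B C)) : HasFiniteDescent B := by
  obtain ⟨k, hk⟩ := (hasFiniteDescent_iff _).1 h
  refine hasFiniteDescent_of_range_pow_le (k := k) ?_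
  rintro _ ⟨y, rfl⟩
  obtain ⟨p, hp⟩ := hk ▸ LinearMap.mem_range_self _ ((0 : X), y)
  exact ⟨p.2, by simpa only [snd_ucMat_pow_apply] using congrArg Prod.snd hp⟩

theorem hasFiniteDescent_ucMat (hA : HasFiniteDescent A) (hB : HasFiniteDescent B) :
    HasFiniteDescent (ucMat A B C) := by
  obtain ⟨d, hd⟩ := (hasFiniteDescent_iff A).1 hA
  obtain ⟨e, he⟩ := (hasFiniteDescent_iff B).1 hB
  set M := (ucMat A B C : X × Y →ₗ[ℂ] X × Y)
  refine hasFiniteDescent_of_range_pow_le (k := d + e) ?_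
  rintro _ ⟨p, rfl⟩
  obtain ⟨y, hy⟩ := he ▸ LinearMap.mem_range_self _ p.2
  set q := (M ^ e) p - (M ^ (e + 1)) (0, y)
  have hq : q = (q.1, 0) := by
    ext
    · rfl
    · simp [q, M, snd_ucMat_pow_apply, hy]
  have hq₁ : ((A : X →ₗ[ℂ] X) ^ d) q.1 ∈ LinearMap.range ((A : X →ₗ[ℂ] X) ^ (d + e + 1)) := by
    rw [Module.End.range_pow_eq_of_le hd (by omega)]
    exact LinearMap.mem_range_self _ _
  obtain ⟨x, hx⟩ := hq₁
  refine ⟨(x, 0) + (0, y), ?_⟩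
  calc (M ^ (d + e + 1)) ((x, 0) + (0, y))
      = (M ^ d) (q.1, 0) + (M ^ d) ((M ^ (e + 1)) (0, y)) := by
        rw [map_add, ucMat_pow_apply_inl, hx, ucMat_pow_apply_inl, ← Module.End.mul_apply,
          ← pow_add, add_assoc]
    _ = (M ^ (d + e)) p := by
        rw [← hq, ← map_add, sub_add_cancel, ← Module.End.mul_apply, ← pow_add]

theorem HasFiniteDescent.of_ucMat_of_hasFiniteAscent (hM : HasFiniteDescent (ucMat A B C))
    (hB : HasFiniteAscent B) : HasFiniteDescent A := by
  obtain ⟨k, hk⟩ := (hasFiniteDescent_iff _).1 hM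
  obtain ⟨a, ha⟩ := (hasFiniteAscent_iff B).1 hB
  set M := (ucMat A B C : X × Y →ₗ[ℂ] X × Y)
  refine hasFiniteDescent_of_range_pow_le (k := k) ?_
  rintro _ ⟨x, rfl⟩
  have hx : (M ^ k) (x, 0) ∈ LinearMap.range (M ^ (k + 1 + a)) := by
    rw [Module.End.range_pow_eq_of_le hk (by omega)]
    exact LinearMap.mem_range_self _ _
  obtain ⟨p, hp⟩ := hx
  rw [pow_add, Module.End.mul_apply] at hp
  have hpa : ((M ^ a) p).2 = 0 := by
    have h2 : ((B : Y →ₗ[ℂ] Y) ^ (a + (k + 1))) p.2 = 0 := by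
      rw [add_comm, ← snd_ucMat_pow_apply A B C, pow_add, Module.End.mul_apply, hp,
        ucMat_pow_apply_inl]
    rwa [snd_ucMat_pow_apply, ← LinearMap.mem_ker, Module.End.ker_pow_constant ha (k + 1)]
  have hq : (M ^ a) p = (((M ^ a) p).1, 0) := Prod.ext rfl hpa
  rw [hq, ucMat_pow_apply_inl, ucMat_pow_apply_inl] at hp
  exact ⟨((M ^ a) p).1, congrArg Prod.fst hp⟩

variable (A B C) in
theorem descentSpectrum_subset_descentSpectrum_ucMat :
    descentSpectrum B ⊆ descentSpectrum (ucMat A B C) := fun z hz hM =>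
  hz (ucMat_sub_smul_one A B C z ▸ hM).of_ucMat

variable (A B C) in
theorem descentSpectrum_ucMat_subset :
    descentSpectrum (ucMat A B C) ⊆ descentSpectrum A ∪ descentSpectrum B := fun z hz => by
  by_contra h
  rw [mem_union, not_or] at h
  exact hz (ucMat_sub_smul_one A B C z ▸ hasFiniteDescent_ucMat (not_not.1 h.1) (not_not.1 h.2))

theorem mem_ascentSpectrum_of_mem_descentSpectrum_of_notMem_ucMat {z : ℂ}
    (hA : z ∈ descentSpectrum A) (hM : z ∉ descentSpectrum (ucMat A B C)) :
    z ∈ ascentSpectrum B := fun hB =>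
  hA ((ucMat_sub_smul_one A B C z ▸ not_not.1 hM).of_ucMat_of_hasFiniteAscent hB)

end UpperTriangular

theorem isClosed_ker_pow (P : E →L[ℂ] E) (n : ℕ) :
    IsClosed (LinearMap.ker ((P : E →ₗ[ℂ] E) ^ n) : Set E) := by
  simpa only [← toLinearMap_pow] using (P ^ n).isClosed_ker

theorem exists_bound_eventually_solvable_mod [CompleteSpace E] (P : E →L[ℂ] E) {V : Submodule ℂ E}
    (hV : IsClosed (V : Set E)) (hPV : LinearMap.range (P : E →ₗ[ℂ] E) ⊔ V = ⊤) :
    ∃ K > (0 : ℝ), ∀ᶠ z in 𝓝 (0 : ℂ), ∀ y, ∃ g, (P - z • 1) g - y ∈ V ∧ ‖g‖ ≤ K * ‖y‖ := by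
  have := hV.completeSpace_coe
  let Φ : (E × V) →L[ℂ] E := P.comp (fst ℂ E V) + V.subtypeL.comp (snd ℂ E V)
  have hΦ : LinearMap.range (Φ : E × V →ₗ[ℂ] E) = ⊤ := by
    refine eq_top_iff.2 fun y _ => ?_
    obtain ⟨_, ⟨x, rfl⟩, v, hv, rfl⟩ := Submodule.mem_sup.1 (hPV ▸ Submodule.mem_top : y ∈ _)
    exact ⟨(x, ⟨v, hv⟩), rfl⟩
  set Φsymm := Φ.nonlinearRightInverseOfSurjective hΦ
  set N : ℝ := (Φsymm.nnnorm : ℝ)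
  have hN : 0 < N := Φ.nonlinearRightInverseOfSurjective_nnnorm_pos hΦ
  refine ⟨2 * N, by positivity, ?_⟩
  filter_upwards [ball_mem_nhds (0 : ℂ) (half_pos (inv_pos.2 hN))] with z hz y
  have hzN : 2 * N * ‖z‖ < 1 :=
    calc 2 * N * ‖z‖ < 2 * N * (N⁻¹ / 2) := by gcongr; exact mem_ball_zero_iff.1 hz
      _ = 1 := by field_simp
  have happrox : ApproximatesLinearOn (fun q : E × V => Φ q - z • q.1) Φ univ ‖z‖₊ := by
    intro a _ b _
    calc ‖Φ a - z • a.1 - (Φ b - z • b.1) - Φ (a - b)‖ = ‖z‖ * ‖(a - b).1‖ := by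
          rw [← norm_smul, ← norm_neg, map_sub, Prod.fst_sub, smul_sub]; congr 1; abel
      _ ≤ ‖z‖₊ * ‖a - b‖ := mul_le_mul_of_nonneg_left (norm_fst_le _) (norm_nonneg z)
  obtain ⟨q, hq, hqy⟩ := happrox.surjOn_closedBall_of_nonlinearRightInverse Φsymm
    (ε := 2 * N * ‖y‖) (b := 0) (by positivity) (subset_univ _) (by
      show dist y (Φ 0 - z • (0 : E × V).1) ≤ (N⁻¹ - ‖z‖₊) * (2 * N * ‖y‖)
      rw [map_zero, Prod.fst_zero, smul_zero, sub_zero, dist_zero_right, coe_nnnorm]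
      calc ‖y‖ ≤ (2 - 2 * N * ‖z‖) * ‖y‖ := le_mul_of_one_le_left (norm_nonneg y) (by linarith)
        _ = (N⁻¹ - ‖z‖) * (2 * N * ‖y‖) := by field_simp)
  refine ⟨q.1, ?_, (norm_fst_le q).trans (by simpa using hq)⟩
  have : (P - z • 1) q.1 - y = -q.2 := by
    rw [← hqy]; simp [Φ]
  rw [this]
  exact V.neg_mem q.2.2

theorem mem_ker_pow_of_injective_sub_smul_one {P : E →L[ℂ] E} {z : ℂ}
    (hz : Injective (P - z • 1 : E →L[ℂ] E)) {n : ℕ} {x : E} (hx : (P - z • 1) x ∈ LinearMap.ker ((P : E →ₗ[ℂ] E) ^ n)) :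
    x ∈ LinearMap.ker ((P : E →ₗ[ℂ] E) ^ n) :=
  Module.End.mem_ker_pow_of_commute_of_injective
    (((Commute.refl P).sub_right ((Commute.one_right P).smul_right z)).map toLinearMapRingHom) hz hx

theorem HasFiniteDescent.hasFiniteAscent_of_frequently_injective [CompleteSpace E] {P : E →L[ℂ] E}
    (hd : HasFiniteDescent P) (h : ∃ᶠ z in 𝓝 (0 : ℂ), Injective (P - z • 1 : E →L[ℂ] E)) :
    HasFiniteAscent P := by
  obtain ⟨k, hk⟩ := (hasFiniteDescent_iff P).1 hd
  set V := LinearMap.ker ((P : E →ₗ[ℂ] E) ^ k)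
  obtain ⟨K, -, hK⟩ := exists_bound_eventually_solvable_mod P (isClosed_ker_pow P k)
    (Module.End.range_sup_ker_pow_eq_top hk)
  refine (hasFiniteAscent_iff P).2
    ⟨k, le_antisymm (Module.End.ker_pow_le_ker_pow_succ _ k) fun x hx => ?_⟩
  have hPx : P x ∈ V := by rwa [LinearMap.mem_ker, pow_succ, Module.End.mul_apply] at hx
  refine (isClosed_ker_pow P k).closure_subset (Metric.mem_closure_iff.2 fun ε hε => ?_)
  have hsmall : ∀ᶠ z in 𝓝 (0 : ℂ), ‖z‖ * (K * ‖x‖) < ε := by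
    have : Tendsto (fun z : ℂ => ‖z‖ * (K * ‖x‖)) (𝓝 0) (𝓝 0) := by
      simpa using (tendsto_norm_zero (E := ℂ)).mul_const (K * ‖x‖)
    exact this.eventually (gt_mem_nhds hε)
  obtain ⟨z, hinj, hsolve, hz⟩ := (h.and_eventually (hK.and hsmall)).exists
  obtain ⟨g, hg, hgK⟩ := hsolve x
  refine ⟨x + z • g, mem_ker_pow_of_injective_sub_smul_one hinj ?_, ?_⟩
  · have : (P - z • 1) (x + z • g) = P x + z • ((P - z • 1) g - x) := by
      simp only [map_add, map_smul, sub_apply, smul_apply, one_apply_eq_self, smul_sub]; abel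
    rw [this]
    exact V.add_mem hPx (V.smul_mem z hg)
  · rw [dist_eq_norm, sub_add_cancel_left, norm_neg, norm_smul]
    exact (mul_le_mul_of_nonneg_left hgK (norm_nonneg z)).trans_lt hz

theorem HasFiniteDescent.eventually_injective_sub_smul_one [CompleteSpace E] {P : E →L[ℂ] E}
    (hd : HasFiniteDescent P) (ha : HasFiniteAscent P) :
    ∀ᶠ z in 𝓝[≠] (0 : ℂ), Injective (P - z • 1 : E →L[ℂ] E) := by
  obtain ⟨k, hk⟩ := (hasFiniteDescent_iff P).1 hd
  obtain ⟨a, ha⟩ := (hasFiniteAscent_iff P).1 ha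
  set V := LinearMap.ker ((P : E →ₗ[ℂ] E) ^ (k + a))
  have hPV : LinearMap.range (P : E →ₗ[ℂ] E) ⊔ V = ⊤ := by
    refine Module.End.range_sup_ker_pow_eq_top ?_
    rw [Module.End.range_pow_eq_of_le hk (n := k + a + 1) (by omega),
      Module.End.range_pow_eq_of_le hk (n := k + a) (by omega)]
  have hV : LinearMap.ker ((P : E →ₗ[ℂ] E) ^ (k + a + 1)) = V := by
    have h₁ := Module.End.ker_pow_constant ha (k + 1)
    have h₂ := Module.End.ker_pow_constant ha k
    rw [show a + (k + 1) = k + a + 1 by omega] at h₁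
    rw [add_comm a k] at h₂
    exact h₁.symm.trans h₂
  obtain ⟨K, hK0, hK⟩ := exists_bound_eventually_solvable_mod P (isClosed_ker_pow P _) hPV
  have hsolve := hK.self_of_nhds
  simp only [zero_smul, sub_zero] at hsolve
  filter_upwards [nhdsWithin_le_nhds (ball_mem_nhds 0 (inv_pos.2 hK0)), self_mem_nhdsWithin]
    with z hzK hz0
  have hzK' : ‖z‖ * K < 1 :=
    calc ‖z‖ * K < K⁻¹ * K := by gcongr; exact mem_ball_zero_iff.1 hzK
      _ = 1 := inv_mul_cancel₀ hK0.ne'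
  rw [injective_iff_map_eq_zero]
  intro x hx
  have hPx : P x = z • x := by simpa [sub_eq_zero] using hx
  -- the distance from `x` to `V` contracts by the factor `‖z‖ * K < 1`
  have hstep : ∀ w ∈ V, infDist x V ≤ ‖z‖ * K * dist x w := by
    intro w hw
    obtain ⟨g, hg, hgK⟩ := hsolve (x - w)
    have hmem : x - z • g ∈ V := by
      rw [← hV, LinearMap.mem_ker, pow_succ, Module.End.mul_apply, ← LinearMap.mem_ker]
      have : P (x - z • g) = -(z • (P g - (x - w) - w)) := by
        rw [map_sub, map_smul, hPx, smul_sub, smul_sub, smul_sub]; abel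
      rw [ContinuousLinearMap.coe_coe, this]
      exact V.neg_mem (V.smul_mem z (V.sub_mem hg hw))
    calc infDist x V ≤ dist x (x - z • g) := infDist_le_dist_of_mem hmem
      _ = ‖z‖ * ‖g‖ := by rw [dist_eq_norm, sub_sub_cancel, norm_smul]
      _ ≤ ‖z‖ * (K * ‖x - w‖) := by gcongr
      _ = ‖z‖ * K * dist x w := by rw [dist_eq_norm, mul_assoc]
  have hd : infDist x V ≤ ‖z‖ * K * infDist x V := by
    have : Nonempty (V : Set E) := ⟨⟨0, V.zero_mem⟩⟩
    rw [infDist_eq_iInf, Real.mul_iInf_of_nonneg (by positivity)]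
    exact le_ciInf fun w => (infDist_eq_iInf (x := x) ▸ hstep w w.2)
  have hxV : x ∈ V := (isClosed_ker_pow P _).closure_subset
    ((mem_closure_iff_infDist_zero ⟨0, V.zero_mem⟩).2
      (le_antisymm (by nlinarith [infDist_nonneg (x := x) (s := (V : Set E))]) infDist_nonneg))
  have hpow := Module.End.pow_apply_of_apply_eq_smul (f := (P : E →ₗ[ℂ] E)) hPx (k + a)
  exact (smul_eq_zero.1 (hpow.symm.trans hxV)).resolve_left (pow_ne_zero _ hz0)

theorem injective_sub_smul_one_of_norm_lt {T : E →L[ℂ] E} {z : ℂ} (hz : ‖T‖ < ‖z‖) :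
    Injective (T - z • 1 : E →L[ℂ] E) := by
  rw [injective_iff_map_eq_zero]
  intro x hx
  have hTx : T x = z • x := by simpa [sub_eq_zero] using hx
  have : ‖z‖ * ‖x‖ ≤ ‖T‖ * ‖x‖ := by rw [← norm_smul, ← hTx]; exact T.le_opNorm x
  exact norm_eq_zero.1 (by nlinarith [norm_nonneg x, norm_nonneg T])

theorem hasFiniteAscent_sub_smul_one_of_isPreconnected [CompleteSpace E] {T : E →L[ℂ] E} {U : Set ℂ}
    (hU : IsPreconnected U) (hUT : Disjoint U (descentSpectrum T)) {w₀ : ℂ} (hw₀U : w₀ ∈ U)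
    (hw₀ : ‖T‖ < ‖w₀‖) {w : ℂ} (hw : w ∈ U) : HasFiniteAscent (T - w • 1) := by
  set S := closure {v : ℂ | Injective (T - v • 1 : E →L[ℂ] E)}
  have hloc : ∀ v ∈ U, v ∈ S → HasFiniteAscent (T - v • 1) ∧ v ∈ interior S := by
    intro v hvU hvS
    have hdes : HasFiniteDescent (T - v • 1) := not_not.1 (hUT.notMem_of_mem_left hvU)
    have hasc : HasFiniteAscent (T - v • 1) := by
      refine hdes.hasFiniteAscent_of_frequently_injective ?_
      rw [mem_closure_iff_frequently, ← map_add_left_nhds_zero, frequently_map] at hvS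
      simpa only [sub_sub, ← add_smul, mem_ofPred_eq] using hvS
    refine ⟨hasc, mem_interior_iff_mem_nhds.2 ?_⟩
    rw [← map_add_left_nhds_zero, mem_map]
    filter_upwards [eventually_nhdsWithin_iff.1 (hdes.eventually_injective_sub_smul_one hasc)]
      with z hz
    change v + z ∈ S
    rcases eq_or_ne z 0 with rfl | hz0
    · simpa using hvS
    · exact subset_closure (by simpa only [sub_sub, ← add_smul, mem_ofPred_eq] using hz hz0)
  have hUS : U ⊆ interior S := by
    refine hU.subset_of_closure_inter_subset isOpen_interior ⟨w₀, hw₀U, ?_⟩ ?_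
    · exact (hloc w₀ hw₀U (subset_closure (injective_sub_smul_one_of_norm_lt hw₀))).2
    · rintro v ⟨hv, hvU⟩
      exact (hloc v hvU (closure_minimal interior_subset isClosed_closure hv)).2
  exact (hloc w hw (interior_subset (hUS hw))).1

theorem IsOpen.disjoint_frontier_connectedComponentIn {α : Type*} [TopologicalSpace α]
    [LocallyConnectedSpace α] {F : Set α} (hF : IsOpen F) (x : α) :
    Disjoint (frontier (connectedComponentIn F x)) F := by
  refine Set.disjoint_left.2 fun w hw hwF => ?_
  rw [hF.connectedComponentIn.frontier_eq] at hw
  obtain ⟨u, huw, hux⟩ := mem_closure_iff.1 hw.1 _ hF.connectedComponentIn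
    (mem_connectedComponentIn hwF)
  have hwx := mem_connectedComponentIn hwF
  rw [connectedComponentIn_eq huw, ← connectedComponentIn_eq hux] at hwx
  exact hw.2 hwx

theorem not_isBounded_connectedComponentIn_lt_norm {F : Type*} [NormedAddCommGroup F]
    [NormedSpace ℂ F] {f : ℂ → F} (hf : Differentiable ℂ f) {m : ℝ} {z : ℂ} (hz : m < ‖f z‖) :
    ¬ Bornology.IsBounded (connectedComponentIn {w | m < ‖f w‖} z) := by
  have hΩ : IsOpen {w | m < ‖f w‖} := isOpen_lt continuous_const hf.continuous.norm
  intro hb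
  refine (Complex.norm_le_of_forall_mem_frontier_norm_le hb hf.diffContOnCl (fun w hw => ?_)
    (subset_closure (mem_connectedComponentIn hz))).not_gt hz
  exact not_lt.1 fun hwΩ => Set.disjoint_left.1 (hΩ.disjoint_frontier_connectedComponentIn z) hw hwΩ

theorem hasFiniteAscent_sub_smul_one_of_notMem_polyHull [CompleteSpace E] (T : E →L[ℂ] E)
    {z : ℂ} (hz : z ∉ polyHull (descentSpectrum T)) : HasFiniteAscent (T - z • 1) := by
  obtain ⟨p, m, hpm, hpz⟩ : ∃ (p : Polynomial ℂ) (m : ℝ),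
      (∀ w ∈ descentSpectrum T, ‖p.eval w‖ ≤ m) ∧ m < ‖p.eval z‖ := by
    simpa [polyHull] using hz
  obtain ⟨w₀, hw₀U, hw₀⟩ : ∃ w₀ ∈ connectedComponentIn {w | m < ‖p.eval w‖} z, ‖T‖ < ‖w₀‖ := by
    have := not_isBounded_connectedComponentIn_lt_norm p.differentiable hpz
    simp only [isBounded_iff_forall_norm_le, not_exists, not_forall, not_le, exists_prop] at this
    exact this ‖T‖
  refine hasFiniteAscent_sub_smul_one_of_isPreconnected isPreconnected_connectedComponentIn ?_ hw₀U hw₀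
    (mem_connectedComponentIn hpz)
  exact Set.disjoint_left.2 fun w hwU hwT =>
    (hpm w hwT).not_gt (connectedComponentIn_subset {w | m < ‖p.eval w‖} z hwU)

theorem stmt18 (A : X →L[ℂ] X) (B : Y →L[ℂ] Y) (C : Y →L[ℂ] X) :
    descentSpectrum B ⊆ descentSpectrum (ucMat A B C) ∧
      descentSpectrum (ucMat A B C) ⊆ descentSpectrum A ∪ descentSpectrum B ∧
      (descentSpectrum A ∪ descentSpectrum B) \ descentSpectrum (ucMat A B C) ⊆
        (descentSpectrum A ∩ ascentSpectrum B) \ descentSpectrum B ∧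
      (descentSpectrum A ∪ descentSpectrum B) \ descentSpectrum (ucMat A B C) ⊆
        polyHull (descentSpectrum B) := by
  have hBM := descentSpectrum_subset_descentSpectrum_ucMat A B C
  have hW : (descentSpectrum A ∪ descentSpectrum B) \ descentSpectrum (ucMat A B C) ⊆
      (descentSpectrum A ∩ ascentSpectrum B) \ descentSpectrum B := by
    rintro z ⟨hAB, hM⟩
    have hB : z ∉ descentSpectrum B := fun h => hM (hBM h)
    have hA : z ∈ descentSpectrum A := hAB.resolve_right hB
    exact ⟨⟨hA, mem_ascentSpectrum_of_mem_descentSpectrum_of_notMem_ucMat hA hM⟩, hB⟩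
  refine ⟨hBM, descentSpectrum_ucMat_subset A B C, hW, fun z hz => ?_⟩
  by_contra hη
  exact (hW hz).1.2 (hasFiniteAscent_sub_smul_one_of_notMem_polyHull B hη)
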